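/- Let G and H be digraphs with γ(G □ H) = γ(G)·γ(H). Let G' be obtained from G by adding a new vertex x and the single new arc (x, v) for some vertex v of G. If γ(G') = γ(G) + 1 and G' satisfies Vizing's inequality (γ(G' □ K) ≥ γ(G')·γ(K) for every digraph K), then γ(G' □ H) = γ(G')·γ(H). -/
import Mathlib


open SimpleGraph

variable {V W : Type*}

/-- The closed out-neighborhood of `v` in the digraph with arc relation `A`. -/
def NplusC (A : V → V → Prop) (v : V) : Set V := insert v {u | A v u}

/-- The closed in-neighborhood of `v`. -/
def NminusC (A : V → V → Prop) (v : V) : Set V := insert v {u | A u v}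

/-- The open out-neighborhood of `v`. -/
def NplusO (A : V → V → Prop) (v : V) : Set V := {u | A v u}

/-- The open in-neighborhood of `v`. -/
def NminusO (A : V → V → Prop) (v : V) : Set V := {u | A u v}

/-- `S` is a dominating set: every vertex is in a closed out-neighborhood of a member of `S`. -/
def IsDomSet (A : V → V → Prop) (S : Set V) : Prop := ∀ u, ∃ v ∈ S, u ∈ NplusC A v

/-- The domination number of a digraph. -/
noncomputable def domNum (V : Type*) [Fintype V] (A : V → V → Prop) : ℕ :=
  sInf {n | ∃ S : Set V, IsDomSet A S ∧ S.ncard = n}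

/-- `P` is a packing: closed in-neighborhoods of members are pairwise disjoint. -/
def IsPacking (A : V → V → Prop) (P : Set V) : Prop :=
  P.Pairwise fun x y => Disjoint (NminusC A x) (NminusC A y)

/-- The packing number of a digraph. -/
noncomputable def packNum (V : Type*) [Fintype V] (A : V → V → Prop) : ℕ :=
  sSup {n | ∃ P : Set V, IsPacking A P ∧ P.ncard = n}

/-- `S` is a total dominating set: every vertex has an in-neighbor in `S`. -/
def IsTotalDomSet (A : V → V → Prop) (S : Set V) : Prop := ∀ u, ∃ v ∈ S, A v u

/-- The total domination number of a digraph. -/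
noncomputable def totalDomNum (V : Type*) [Fintype V] (A : V → V → Prop) : ℕ :=
  sInf {n | ∃ S : Set V, IsTotalDomSet A S ∧ S.ncard = n}

/-- `P` is an open packing: open in-neighborhoods of members are pairwise disjoint. -/
def IsOpenPacking (A : V → V → Prop) (P : Set V) : Prop :=
  P.Pairwise fun x y => Disjoint (NminusO A x) (NminusO A y)

/-- The open packing number of a digraph. -/
noncomputable def openPackNum (V : Type*) [Fintype V] (A : V → V → Prop) : ℕ :=
  sSup {n | ∃ P : Set V, IsOpenPacking A P ∧ P.ncard = n}

/-- The underlying (simple) graph of a digraph. -/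
def ugr (A : V → V → Prop) : SimpleGraph V := SimpleGraph.fromRel A

/-- A ditree is a digraph whose underlying graph is a tree. -/
def IsDitree (A : V → V → Prop) : Prop := (ugr A).IsTree

/-- Arc relation of the Cartesian product of two digraphs. -/
def cartArc (A : V → V → Prop) (B : W → W → Prop) : V × W → V × W → Prop :=
  fun p q => (p.1 = q.1 ∧ B p.2 q.2) ∨ (p.2 = q.2 ∧ A p.1 q.1)

/-- Arc relation of the direct product of two digraphs. -/
def dirArc (A : V → V → Prop) (B : W → W → Prop) : V × W → V × W → Prop :=
  fun p q => A p.1 q.1 ∧ B p.2 q.2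

/-- The closed in-neighborhood graph of a digraph: distinct vertices are adjacent iff
their closed in-neighborhoods intersect. -/
def Ncg (A : V → V → Prop) : SimpleGraph V :=
  SimpleGraph.fromRel (fun u v => (NminusC A u ∩ NminusC A v).Nonempty)

/-- The open in-neighborhood graph of a digraph: distinct vertices are adjacent iff
their open in-neighborhoods intersect. -/
def Nog (A : V → V → Prop) : SimpleGraph V :=
  SimpleGraph.fromRel (fun u v => (NminusO A u ∩ NminusO A v).Nonempty)

/-- The digraph obtained from `A` by adding a new vertex (`none`) together with the single
new arc from the new vertex to `v`. -/
def extendArc (A : V → V → Prop) (v : V) : Option V → Option V → Prop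
  | some a, some b => A a b
  | none, some b => b = v
  | _, _ => False

lemma domNum_exists (V : Type*) [Fintype V] (A : V → V → Prop) :
    ∃ S : Set V, IsDomSet A S ∧ S.ncard = domNum V A := by
  have hne : (Set.univ : Set V).ncard ∈ {n | ∃ S : Set V, IsDomSet A S ∧ S.ncard = n} :=
    ⟨Set.univ, fun u => ⟨u, trivial, Set.mem_insert u _⟩, rfl⟩
  exact Nat.sInf_mem ⟨_, hne⟩

lemma domNum_le (V : Type*) [Fintype V] (A : V → V → Prop) (S : Set V)
    (hS : IsDomSet A S) : domNum V A ≤ S.ncard :=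
  Nat.sInf_le ⟨S, hS, rfl⟩

theorem stmt18 {V W : Type} [Fintype V] [Fintype W]
    (A : V → V → Prop) (B : W → W → Prop)
    (hirrA : ∀ v, ¬ A v v) (hirrB : ∀ w, ¬ B w w)
    (v : V)
    (heq : domNum (V × W) (cartArc A B) = domNum V A * domNum W B)
    (hG' : domNum (Option V) (extendArc A v) = domNum V A + 1)
    (hViz : ∀ (U : Type) [Fintype U] (C : U → U → Prop), (∀ u, ¬ C u u) →
      domNum (Option V × U) (cartArc (extendArc A v) C) ≥
        domNum (Option V) (extendArc A v) * domNum U C) :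
    domNum (Option V × W) (cartArc (extendArc A v) B) =
      domNum (Option V) (extendArc A v) * domNum W B := by
  refine le_antisymm ?_ (hViz W B hirrB)
  obtain ⟨S, hS, hScard⟩ := domNum_exists (V × W) (cartArc A B)
  obtain ⟨T, hT, hTcard⟩ := domNum_exists W B
  set S' : Set (Option V × W) :=
    (fun p : V × W => (some p.1, p.2)) '' S ∪ (fun h => (none, h)) '' T with hS'def
  have hdom : IsDomSet (cartArc (extendArc A v) B) S' := by
    rintro ⟨a, w⟩
    cases a with
    | some g =>
      obtain ⟨⟨g', w'⟩, hmem, hdom⟩ := hS (g, w)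
      refine ⟨(some g', w'), Or.inl ⟨(g', w'), hmem, rfl⟩, ?_⟩
      rcases hdom with h | h
      · rw [Prod.mk.injEq] at h
        exact Or.inl (by simp [h.1, h.2])
      · rcases h with ⟨h1, h2⟩ | ⟨h1, h2⟩
        · exact Or.inr (Or.inl ⟨congrArg some h1, h2⟩)
        · exact Or.inr (Or.inr ⟨h1, h2⟩)
    | none =>
      obtain ⟨t, htT, hdom⟩ := hT w
      refine ⟨(none, t), Or.inr ⟨t, htT, rfl⟩, ?_⟩
      rcases hdom with h | h
      · exact Or.inl (by simp [h])
      · exact Or.inr (Or.inl ⟨rfl, h⟩)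
  have hcard : S'.ncard ≤ S.ncard + T.ncard := by
    refine le_trans (Set.ncard_union_le _ _) ?_
    exact Nat.add_le_add (Set.ncard_image_le (Set.toFinite _))
      (Set.ncard_image_le (Set.toFinite _))
  calc domNum (Option V × W) (cartArc (extendArc A v) B) ≤ S'.ncard :=
        domNum_le _ _ _ hdom
    _ ≤ S.ncard + T.ncard := hcard
    _ = domNum V A * domNum W B + domNum W B := by rw [hScard, hTcard, heq]
    _ = domNum (Option V) (extendArc A v) * domNum W B := by rw [hG']; ring
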